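/- arXiv:1204.0471 — 3 statements merged into one kernel-verified Lean document; each statement's English description precedes it below -/
import Mathlib

section
/- Let (u_i)_{i∈I} and (v_j)_{j∈J} be vectors in ℝ^d with ⟨u_i, v_j⟩ ≤ 1 for all i, j, let L = span(v_j : j ∈ J), and define a_{ij} = 1 − ⟨u_i, v_j⟩. Suppose the number of distinct values among the a_{ij} is at most k. Then there is a convex set C ⊆ ℝ^d of the form C = C' + L^⊥, where C' ⊆ L is the image under an affine map of a section of the cone of r×r symmetric PSD matrices by an affine subspace with r ≤ C(d + k, k − 1), such that u_i ∈ C for all i ∈ I and ⟨x, v_j⟩ ≤ 1 for all x ∈ C and all j ∈ J. -/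
/-!
The entries `1 - ⟪u i, v j⟫` are nonnegative and take at most `k` values, so their square roots
are `p (1 - ⟪u i, v j⟫)` for one polynomial `p` of degree `< k`. Expanding `p (1 - ⟪x, v j⟫)` in
the monomials of degree `≤ k - 1` in `x` factors the square roots as `a i ⬝ᵥ w j`, where `a i` is
the vector of monomials evaluated at `u i`; there are `C(d + k - 1, k - 1)` of them. The rank-one
PSD matrices `a i a iᵀ` then lie on the affine section `{M | w jᵀ M w j + ⟪T M, v j⟫ = 1}`, where
`T M` reads the coordinates of `u i` off the entries of `a i a iᵀ`, and on the PSD part of that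
section `⟪T M, v j⟫ = 1 - w jᵀ M w j ≤ 1`. Projecting the shadow onto `L` and adding `Lᗮ` gives `C`.
-/

open Pointwise Matrix Set Submodule
open scoped Polynomial

section PSDLift

variable {E F : Type*} [NormedAddCommGroup E] [InnerProductSpace ℝ E]
  [NormedAddCommGroup F] [InnerProductSpace ℝ F] {I J ι κ : Type*}

def IsSpectrahedralShadow (ι : Type*) (C : Set E) : Prop :=
  ∃ (A : AffineSubspace ℝ (Matrix ι ι ℝ)) (T : Matrix ι ι ℝ →ᵃ[ℝ] E),
    C = T '' ((A : Set (Matrix ι ι ℝ)) ∩ {M | M.PosSemidef})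

theorem convex_setOf_posSemidef : Convex ℝ {M : Matrix ι ι ℝ | M.PosSemidef} :=
  fun _ hM _ hN _ _ ha hb _ => (hM.smul ha).add (hN.smul hb)

namespace IsSpectrahedralShadow

variable {C : Set E}

theorem convex (hC : IsSpectrahedralShadow ι C) : Convex ℝ C := by
  obtain ⟨A, T, rfl⟩ := hC
  exact (A.convex.inter convex_setOf_posSemidef).affine_image T

theorem image (hC : IsSpectrahedralShadow ι C) (f : E →ᵃ[ℝ] F) :
    IsSpectrahedralShadow ι (f '' C) := by
  obtain ⟨A, T, rfl⟩ := hC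
  exact ⟨A, f.comp T, by rw [Set.image_image]; rfl⟩

end IsSpectrahedralShadow

def HasPSDLift (ι : Type*) [Fintype ι] (u : I → E) (v : J → E) : Prop :=
  ∃ (a : I → ι → ℝ) (w : J → ι → ℝ) (T : Matrix ι ι ℝ →ᵃ[ℝ] E), ∀ i j,
    inner ℝ (T (vecMulVec (a i) (a i))) (v j) = inner ℝ (u i) (v j) ∧
      (a i ⬝ᵥ w j) ^ 2 = 1 - inner ℝ (u i) (v j)

namespace HasPSDLift

variable [Fintype ι] [Fintype κ] {u : I → E} {v : J → E}

theorem reindex (e : ι ≃ κ) (h : HasPSDLift ι u v) : HasPSDLift κ u v := by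
  obtain ⟨a, w, T, h⟩ := h
  refine ⟨fun i => a i ∘ e.symm, fun j => w j ∘ e.symm,
    T.comp (reindexLinearEquiv ℝ ℝ e.symm e.symm).toLinearMap.toAffineMap, fun i j => ?_⟩
  have hX : (vecMulVec (a i ∘ e.symm) (a i ∘ e.symm)).submatrix e e = vecMulVec (a i) (a i) := by
    ext; simp [vecMulVec_apply]
  have hdot : (a i ∘ e.symm) ⬝ᵥ (w j ∘ e.symm) = a i ⬝ᵥ w j := by
    simp [dotProduct, Function.comp_apply, e.symm.sum_comp (fun k => a i k * w j k)]
  simpa [hX, hdot] using h i j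

theorem exists_spectrahedralShadow (h : HasPSDLift ι u v) :
    ∃ D : Set E, IsSpectrahedralShadow ι D ∧
      (∀ i, ∃ y ∈ D, ∀ j, inner ℝ y (v j) = inner ℝ (u i) (v j)) ∧
      ∀ y ∈ D, ∀ j, inner ℝ y (v j) ≤ 1 := by
  obtain ⟨a, w, T, h⟩ := h
  let A : AffineSubspace ℝ (Matrix ι ι ℝ) :=
    { carrier := {M | ∀ j, w j ⬝ᵥ (M *ᵥ w j) + inner ℝ (T M) (v j) = 1}
      smul_vsub_vadd_mem' := by
        intro c M₁ M₂ M₃ h₁ h₂ h₃ j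
        have e₁ := h₁ j
        have e₂ := h₂ j
        have e₃ := h₃ j
        rw [T.map_vadd, T.linear.map_smul, T.linearMap_vsub]
        simp only [vsub_eq_sub, vadd_eq_add, add_mulVec, smul_mulVec, sub_mulVec,
          dotProduct_add, dotProduct_smul, dotProduct_sub, smul_eq_mul, inner_add_left,
          inner_sub_left, real_inner_smul_left]
        linear_combination c * e₁ - c * e₂ + e₃ }
  have hX : ∀ i, vecMulVec (a i) (a i) ∈ A := fun i j => by
    rw [vecMulVec_mulVec, op_smul_eq_smul, dotProduct_smul, smul_eq_mul, dotProduct_comm (w j),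
      ← sq, (h i j).2, (h i j).1, sub_add_cancel]
  refine ⟨T '' (A ∩ {M | M.PosSemidef}), ⟨A, T, rfl⟩,
    fun i => ⟨_, ⟨vecMulVec (a i) (a i), ⟨hX i, posSemidef_vecMulVec_self_star (a i)⟩, rfl⟩,
      fun j => (h i j).1⟩, ?_⟩
  rintro _ ⟨M, ⟨hMA, hM⟩, rfl⟩ j
  have hquad : 0 ≤ w j ⬝ᵥ (M *ᵥ w j) := by simpa using hM.dotProduct_mulVec_nonneg (w j)
  linarith [hMA j]

end HasPSDLift

section Monomials

variable {d : ℕ}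

def homogenize (x : EuclideanSpace ℝ (Fin d)) : Option (Fin d) → ℝ := fun o => o.elim 1 x

theorem homogenize_dotProduct_homogenize (x y : EuclideanSpace ℝ (Fin d)) :
    homogenize y ⬝ᵥ homogenize x = 1 + inner ℝ x y := by
  simp [homogenize, dotProduct, Fintype.sum_option, PiLp.inner_apply, mul_comm]

/-- A monomial of degree `≤ t` in `x`, written as a monomial of degree exactly `t` in `(1, x)`. -/
def homogenizedMonomial {t : ℕ} (m : Sym (Option (Fin d)) t) (x : EuclideanSpace ℝ (Fin d)) : ℝ :=
  ((m : Multiset (Option (Fin d))).map (homogenize x)).prod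

theorem homogenizedMonomial_cons {t : ℕ} (o : Option (Fin d)) (m : Sym (Option (Fin d)) t)
    (x : EuclideanSpace ℝ (Fin d)) :
    homogenizedMonomial (o ::ₛ m) x = homogenize x o * homogenizedMonomial m x := by
  simp [homogenizedMonomial, Sym.coe_cons]

theorem homogenizedMonomial_replicate_none (t : ℕ) (x : EuclideanSpace ℝ (Fin d)) :
    homogenizedMonomial (Sym.replicate t none) x = 1 := by
  simp [homogenizedMonomial, homogenize, Sym.coe_replicate]

variable (d) in
def homogenizedMonomialSpan (t : ℕ) : Submodule ℝ (EuclideanSpace ℝ (Fin d) → ℝ) :=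
  span ℝ (range (homogenizedMonomial (d := d) (t := t)))

theorem const_mem_homogenizedMonomialSpan (t : ℕ) (c : ℝ) :
    (fun _ => c) ∈ homogenizedMonomialSpan d t := by
  have : (fun _ => c) = c • homogenizedMonomial (Sym.replicate t (none : Option (Fin d))) := by
    ext x; simp [homogenizedMonomial_replicate_none]
  rw [this]
  exact smul_mem _ _ (subset_span ⟨_, rfl⟩)

theorem mul_mem_homogenizedMonomialSpan_succ {t : ℕ} (c : Option (Fin d) → ℝ)
    {g : EuclideanSpace ℝ (Fin d) → ℝ} (hg : g ∈ homogenizedMonomialSpan d t) :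
    (fun x => c ⬝ᵥ homogenize x) * g ∈ homogenizedMonomialSpan d (t + 1) := by
  refine (map_span_le (LinearMap.mulLeft ℝ fun x => c ⬝ᵥ homogenize x) _ _).2 ?_ ⟨g, hg, rfl⟩
  rintro _ ⟨m, rfl⟩
  have : (fun x => c ⬝ᵥ homogenize x) * homogenizedMonomial m =
      ∑ o, c o • homogenizedMonomial (o ::ₛ m) := by
    ext x; simp [homogenizedMonomial_cons, dotProduct, add_mul, Finset.sum_mul, mul_assoc]
  rw [LinearMap.mulLeft_apply, this]
  exact sum_mem fun o _ => smul_mem _ _ (subset_span ⟨_, rfl⟩)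

theorem eval_dotProduct_homogenize_mem_homogenizedMonomialSpan (c : Option (Fin d) → ℝ) {t : ℕ}
    {p : ℝ[X]} (hp : p.natDegree ≤ t) :
    (fun x => p.eval (c ⬝ᵥ homogenize x)) ∈ homogenizedMonomialSpan d t := by
  induction t generalizing p with
  | zero =>
    rw [Polynomial.eq_C_of_natDegree_le_zero hp]
    simpa using const_mem_homogenizedMonomialSpan 0 (p.coeff 0)
  | succ t ih =>
    have hq : p.divX.natDegree ≤ t := by
      rw [Polynomial.natDegree_divX_eq_natDegree_tsub_one]; omega
    have horner : (fun x => p.eval (c ⬝ᵥ homogenize x)) =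
        (fun x => c ⬝ᵥ homogenize x) * (fun x => p.divX.eval (c ⬝ᵥ homogenize x)) +
          fun _ => p.coeff 0 := by
      ext x
      conv_lhs => rw [← Polynomial.X_mul_divX_add p]
      simp only [Polynomial.eval_add, Polynomial.eval_mul, Polynomial.eval_X, Polynomial.eval_C,
        Pi.add_apply, Pi.mul_apply]
    rw [horner]
    exact add_mem (mul_mem_homogenizedMonomialSpan_succ c (ih hq))
      (const_mem_homogenizedMonomialSpan _ _)

end Monomials

theorem exists_natDegree_le_eval_eq_sqrt {S : Finset ℝ} {K : ℕ} (hS : S.card ≤ K + 1) :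
    ∃ f : ℝ[X], f.natDegree ≤ K ∧ ∀ s ∈ S, f.eval s = √s := by
  refine ⟨Lagrange.interpolate S id Real.sqrt, ?_, fun s hs => ?_⟩
  · have hf : Lagrange.interpolate S id Real.sqrt ∈ Polynomial.degreeLT ℝ (K + 1) :=
      Polynomial.mem_degreeLT.2 ((Lagrange.degree_interpolate_lt _ (injOn_id _)).trans_le
        (by exact_mod_cast hS))
    rw [Polynomial.degreeLT_succ_eq_degreeLE, Polynomial.mem_degreeLE] at hf
    exact Polynomial.natDegree_le_of_degree_le hf
  · simpa using Lagrange.eval_interpolate_at_node Real.sqrt (injOn_id _) hs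

theorem hasPSDLift_fin_one_of_card_le_one {u : I → E} {v : J → E}
    (h1 : ∀ i j, inner ℝ (u i) (v j) ≤ 1)
    {S : Finset ℝ} (hS : S.card ≤ 1) (hval : ∀ i j, 1 - inner ℝ (u i) (v j) ∈ S) :
    HasPSDLift (Fin 1) u v := by
  rcases isEmpty_or_nonempty I with hI | ⟨⟨i₀⟩⟩
  · exact ⟨isEmptyElim, 0, 0, isEmptyElim⟩
  have hconst : ∀ i j, inner ℝ (u i) (v j) = inner ℝ (u i₀) (v j) := fun i j => by
    have := Finset.card_le_one.1 hS _ (hval i j) _ (hval i₀ j)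
    linarith
  refine ⟨fun _ _ => 1, fun j _ => √(1 - inner ℝ (u i₀) (v j)), AffineMap.const ℝ _ (u i₀),
    fun i j => ⟨(hconst i j).symm, ?_⟩⟩
  simp [dotProduct, hconst i j, Real.sq_sqrt (sub_nonneg.2 (h1 i₀ j))]

theorem hasPSDLift_sym_of_card_le {d K : ℕ} {u : I → EuclideanSpace ℝ (Fin d)}
    {v : J → EuclideanSpace ℝ (Fin d)} (h1 : ∀ i j, inner ℝ (u i) (v j) ≤ 1)
    {S : Finset ℝ} (hS : S.card ≤ K + 2) (hval : ∀ i j, 1 - inner ℝ (u i) (v j) ∈ S) :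
    HasPSDLift (Sym (Option (Fin d)) (K + 1)) u v := by
  obtain ⟨f, hf, hfS⟩ := exists_natDegree_le_eval_eq_sqrt hS
  have hw : ∀ j, ∃ w : Sym (Option (Fin d)) (K + 1) → ℝ, ∑ m, w m • homogenizedMonomial m =
      fun x => f.eval (homogenize (-v j) ⬝ᵥ homogenize x) := fun j =>
    (mem_span_range_iff_exists_fun ℝ).1
      (eval_dotProduct_homogenize_mem_homogenizedMonomialSpan _ hf)
  choose w hw using hw
  -- the entry of `a aᵀ` at the monomials `1` and `x_s` is `x_s`
  let T : Matrix (Sym (Option (Fin d)) (K + 1)) (Sym (Option (Fin d)) (K + 1)) ℝ →ₗ[ℝ]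
      EuclideanSpace ℝ (Fin d) :=
    (WithLp.linearEquiv 2 ℝ _).symm.toLinearMap ∘ₗ LinearMap.pi fun s =>
      entryLinearMap ℝ ℝ (Sym.replicate (K + 1) none) (some s ::ₛ Sym.replicate K none)
  refine ⟨fun i m => homogenizedMonomial m (u i), w, T.toAffineMap, fun i j => ⟨?_, ?_⟩⟩
  · congr 1
    ext s
    simp [T, vecMulVec_apply, homogenizedMonomial_replicate_none, homogenizedMonomial_cons,
      homogenize]
  · have hdot : (fun m => homogenizedMonomial m (u i)) ⬝ᵥ w j =
        f.eval (1 - inner ℝ (u i) (v j)) := by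
      have := congrFun (hw j) (u i)
      simp only [Finset.sum_apply, Pi.smul_apply, smul_eq_mul, homogenize_dotProduct_homogenize,
        inner_neg_right, ← sub_eq_add_neg] at this
      simpa [dotProduct, mul_comm] using this
    rw [hdot, hfS _ (hval i j), Real.sq_sqrt (sub_nonneg.2 (h1 i j))]

theorem exists_hasPSDLift_fin {d k : ℕ} {u : I → EuclideanSpace ℝ (Fin d)}
    {v : J → EuclideanSpace ℝ (Fin d)} (h1 : ∀ i j, inner ℝ (u i) (v j) ≤ 1)
    {S : Finset ℝ} (hS : S.card ≤ k) (hval : ∀ i j, 1 - inner ℝ (u i) (v j) ∈ S) :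
    ∃ r ≤ (d + k).choose (k - 1), HasPSDLift (Fin r) u v := by
  rcases le_or_gt k 1 with hk | hk
  · exact ⟨1, by simp [Nat.sub_eq_zero_of_le hk],
      hasPSDLift_fin_one_of_card_le_one h1 (hS.trans hk) hval⟩
  obtain ⟨K, rfl⟩ : ∃ K, k = K + 2 := ⟨k - 2, by omega⟩
  refine ⟨_, ?_, (hasPSDLift_sym_of_card_le h1 hS hval).reindex (Fintype.equivFin _)⟩
  rw [Sym.card_sym_eq_choose, Fintype.card_option, Fintype.card_fin]
  exact Nat.choose_le_choose _ (by omega)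

theorem sub_mem_orthogonal_span_range {v : J → E} {x y : E}
    (h : ∀ j, inner ℝ x (v j) = inner ℝ y (v j)) : x - y ∈ (span ℝ (range v))ᗮ := by
  refine (mem_orthogonal' _ _).2 fun z hz => ?_
  have : span ℝ (range v) ≤ LinearMap.ker (innerₛₗ ℝ (x - y)) :=
    span_le.2 <| range_subset_iff.2 fun j => by simp [h j]
  exact this hz

end PSDLift

theorem stmt12_general {d k : ℕ} {I J : Type*}
    (u : I → EuclideanSpace ℝ (Fin d)) (v : J → EuclideanSpace ℝ (Fin d))
    (h1 : ∀ i j, (inner ℝ (u i) (v j) : ℝ) ≤ 1)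
    (S : Finset ℝ) (hS : S.card ≤ k)
    (hval : ∀ i j, 1 - (inner ℝ (u i) (v j) : ℝ) ∈ S) :
    ∃ (C C' : Set (EuclideanSpace ℝ (Fin d))),
      Convex ℝ C ∧
      C = C' + ((Submodule.span ℝ (Set.range v))ᗮ : Set (EuclideanSpace ℝ (Fin d))) ∧
      C' ⊆ (Submodule.span ℝ (Set.range v) : Set (EuclideanSpace ℝ (Fin d))) ∧
      (∃ r : ℕ, r ≤ (d + k).choose (k - 1) ∧
        ∃ (A : AffineSubspace ℝ (Matrix (Fin r) (Fin r) ℝ))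
          (T : Matrix (Fin r) (Fin r) ℝ →ᵃ[ℝ] EuclideanSpace ℝ (Fin d)),
          C' = T '' ((A : Set (Matrix (Fin r) (Fin r) ℝ)) ∩ {M | M.PosSemidef})) ∧
      (∀ i, u i ∈ C) ∧ (∀ x ∈ C, ∀ j, (inner ℝ x (v j) : ℝ) ≤ 1) := by
  set L := span ℝ (range v)
  obtain ⟨r, hr, hlift⟩ := exists_hasPSDLift_fin h1 hS hval
  obtain ⟨D, hD, hDu, hDv⟩ := hlift.exists_spectrahedralShadow
  have hP : ∀ y j, inner ℝ (L.starProjection y) (v j) = inner ℝ y (v j) := fun y j => by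
    rw [inner_starProjection_left_eq_right,
      starProjection_eq_self_iff.2 (subset_span (mem_range_self j))]
  have hPD := hD.image L.starProjection.toLinearMap.toAffineMap
  refine ⟨L.starProjection '' D + Lᗮ, L.starProjection '' D, hPD.convex.add Lᗮ.convex, rfl,
    ?_, ⟨r, hr, hPD⟩, fun i => ?_, ?_⟩
  · rintro _ ⟨y, -, rfl⟩
    exact L.starProjection_apply_mem y
  · obtain ⟨y, hy, hyu⟩ := hDu i
    refine ⟨_, ⟨y, hy, rfl⟩, _, sub_mem_orthogonal_span_range fun j => ?_, add_sub_cancel _ _⟩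
    rw [hP, hyu]
  · rintro _ ⟨_, ⟨y, hy, rfl⟩, z, hz, rfl⟩ j
    rw [inner_add_left, hP, inner_left_of_mem_orthogonal (subset_span (mem_range_self j)) hz,
      add_zero]
    exact hDv y hy j

theorem stmt12 {d k : ℕ} (hk : 0 < k) {I J : Type*}
    (u : I → EuclideanSpace ℝ (Fin d)) (v : J → EuclideanSpace ℝ (Fin d))
    (h1 : ∀ i j, (inner ℝ (u i) (v j) : ℝ) ≤ 1)
    (S : Finset ℝ) (hS : S.card ≤ k)
    (hval : ∀ i j, 1 - (inner ℝ (u i) (v j) : ℝ) ∈ S) :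
    ∃ (C C' : Set (EuclideanSpace ℝ (Fin d))),
      Convex ℝ C ∧
      C = C' + ((Submodule.span ℝ (Set.range v))ᗮ : Set (EuclideanSpace ℝ (Fin d))) ∧
      C' ⊆ (Submodule.span ℝ (Set.range v) : Set (EuclideanSpace ℝ (Fin d))) ∧
      (∃ r : ℕ, r ≤ (d + k).choose (k - 1) ∧
        ∃ (A : AffineSubspace ℝ (Matrix (Fin r) (Fin r) ℝ))
          (T : Matrix (Fin r) (Fin r) ℝ →ᵃ[ℝ] EuclideanSpace ℝ (Fin d)),
          C' = T '' ((A : Set (Matrix (Fin r) (Fin r) ℝ)) ∩ {M | M.PosSemidef})) ∧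
      (∀ i, u i ∈ C) ∧ (∀ x ∈ C, ∀ j, (inner ℝ x (v j) : ℝ) ≤ 1) :=
  stmt12_general u v h1 S hS hval
end

section
/- Let A = (a_{ij}), i ∈ I, j ∈ J, be a matrix whose entries take at most k distinct values, each of which is a rational of the form m/k with m ∈ {0, 1, …, k} (i.e., 0 ≤ a_{ij} ≤ 1 and k·a_{ij} ∈ ℤ). If rank A ≤ d + 2, then rank_psd A ≤ C(d + k + 2, k). -/
/-!
On the `k + 1` values `m / k` that the entries may take, `√·` agrees with a polynomial `p` of
degree at most `k` (Lagrange interpolation). By the multinomial theorem,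
`√(a i j) = p (⟪u i, v j⟫)` is an inner product `⟪w i, z j⟫` of feature vectors indexed by the
monomials of degree at most `k` in `d + 2` variables, of which there are `(d + k + 2).choose k`.
Then `a i j = ⟪w i, z j⟫ ^ 2 = ⟪w i w iᵀ, z j z jᵀ⟫`, an inner product of rank-one PSD matrices.
-/

open Finset Matrix Polynomial

section SymFeatures

variable {ι R : Type*} [Fintype ι] [DecidableEq ι] [CommSemiring R]

def symMonomial {s : ℕ} (u : ι → R) (m : Sym ι s) : R :=
  ((m : Multiset ι).map u).prod

theorem dotProduct_pow_eq_sum_sym (u v : ι → R) (s : ℕ) :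
    (u ⬝ᵥ v) ^ s =
      ∑ m : Sym ι s, (m : Multiset ι).countPerms * symMonomial u m * symMonomial v m := by
  rw [dotProduct, Finset.sum_pow, sym_univ]
  refine sum_congr rfl fun m _ => ?_
  rw [mul_assoc, symMonomial, symMonomial, ← Multiset.prod_map_mul]
  rfl

theorem eval_dotProduct_eq_sum_sigma_sym {p : R[X]} {k : ℕ} (hp : p.natDegree ≤ k)
    (u v : ι → R) :
    p.eval (u ⬝ᵥ v) = ∑ x : Σ s : Fin (k + 1), Sym ι s,
      p.coeff x.1 * (x.2 : Multiset ι).countPerms * symMonomial u x.2 * symMonomial v x.2 := by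
  rw [eval_eq_sum_range' (Nat.lt_succ_of_le hp), ← Fin.sum_univ_eq_sum_range,
    ← univ_sigma_univ, sum_sigma]
  refine sum_congr rfl fun s _ => ?_
  simp only [dotProduct_pow_eq_sum_sym, mul_sum, mul_assoc]

end SymFeatures

theorem card_sigma_fin_sym (α : Type*) [Fintype α] [DecidableEq α] (k : ℕ) :
    Fintype.card (Σ s : Fin (k + 1), Sym α s) = (Fintype.card α + k).choose k := by
  rw [Fintype.card_sigma, Fin.sum_univ_eq_sum_range (fun s => Fintype.card (Sym α s))]
  simp only [Sym.card_sym_eq_multichoose]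
  rw [Nat.sum_range_multichoose, add_comm, Nat.choose_symm_add]

theorem Polynomial.exists_natDegree_le_eval_eq {F : Type*} [Field F] [DecidableEq F]
    (s : Finset F) (f : F → F) {n : ℕ} (hs : #s ≤ n + 1) :
    ∃ p : F[X], p.natDegree ≤ n ∧ ∀ x ∈ s, p.eval x = f x := by
  have hid : Set.InjOn id (s : Set F) := Set.injOn_id _
  refine ⟨Lagrange.interpolate s id f, ?_, fun x hx => Lagrange.eval_interpolate_at_node f hid hx⟩
  have hdeg : (Lagrange.interpolate s id f).degree < (n + 1 : ℕ) :=
    (Lagrange.degree_interpolate_lt f hid).trans_le (by exact_mod_cast hs)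
  exact natDegree_le_iff_degree_le.2 (Order.le_of_lt_succ hdeg)

theorem sum_vecMulVec_mul_vecMulVec {n R : Type*} [Fintype n] [CommSemiring R] (w z : n → R) :
    ∑ p, ∑ q, vecMulVec w w p q * vecMulVec z z p q = (w ⬝ᵥ z) ^ 2 := by
  simp only [vecMulVec_apply, dotProduct, sq, sum_mul_sum]
  exact sum_congr rfl fun p _ => sum_congr rfl fun q _ => by ring

theorem Matrix.posSemidef_vecMulVec_self {n : Type*} [Fintype n] (w : n → ℝ) :
    (vecMulVec w w).PosSemidef := by
  simpa using posSemidef_vecMulVec_self_star w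

theorem stmt16_general {I J : Type*} (d k : ℕ) (a : I → J → ℝ)
    (hval : ∀ i j, ∃ m : ℕ, m ≤ k ∧ a i j = (m : ℝ) / k)
    (u : I → Fin (d + 2) → ℝ) (v : J → Fin (d + 2) → ℝ)
    (ha : ∀ i j, a i j = ∑ t, u i t * v j t) :
    ∃ (U : I → Matrix (Fin ((d + k + 2).choose k)) (Fin ((d + k + 2).choose k)) ℝ)
      (V : J → Matrix (Fin ((d + k + 2).choose k)) (Fin ((d + k + 2).choose k)) ℝ),
      (∀ i, (U i).PosSemidef) ∧ (∀ j, (V j).PosSemidef) ∧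
      ∀ i j, a i j = ∑ p, ∑ q, U i p q * V j p q := by
  classical
  obtain ⟨p, hp_deg, hp_sqrt⟩ := exists_natDegree_le_eval_eq
    ((range (k + 1)).image fun m : ℕ => (m : ℝ) / k) Real.sqrt (card_image_le.trans_eq (card_range _))
  let e : (Σ s : Fin (k + 1), Sym (Fin (d + 2)) s) ≃ Fin ((d + k + 2).choose k) :=
    Fintype.equivFinOfCardEq (by rw [card_sigma_fin_sym, Fintype.card_fin, Nat.add_right_comm])
  let w i x := p.coeff (e.symm x).1 * ((e.symm x).2 : Multiset (Fin (d + 2))).countPerms *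
    symMonomial (u i) (e.symm x).2
  let z j x := symMonomial (v j) (e.symm x).2
  have hsqrt : ∀ i j, √(a i j) = w i ⬝ᵥ z j := by
    intro i j
    obtain ⟨m, hm, hmv⟩ := hval i j
    rw [← hp_sqrt (a i j) (hmv ▸ mem_image_of_mem _ (mem_range.2 (Nat.lt_succ_of_le hm))), ha,
      ← dotProduct, eval_dotProduct_eq_sum_sigma_sym hp_deg]
    exact (e.symm.sum_comp _).symm
  refine ⟨fun i => vecMulVec (w i) (w i), fun j => vecMulVec (z j) (z j),
    fun i => posSemidef_vecMulVec_self _, fun j => posSemidef_vecMulVec_self _, fun i j => ?_⟩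
  obtain ⟨m, -, hmv⟩ := hval i j
  rw [sum_vecMulVec_mul_vecMulVec, ← hsqrt, Real.sq_sqrt (hmv ▸ by positivity)]

theorem stmt16 {I J : Type*} (d k : ℕ) (hk : 0 < k) (a : I → J → ℝ)
    (hval : ∀ i j, ∃ m : ℕ, m ≤ k ∧ a i j = (m : ℝ) / k)
    (u : I → Fin (d + 2) → ℝ) (v : J → Fin (d + 2) → ℝ)
    (ha : ∀ i j, a i j = ∑ t, u i t * v j t) :
    ∃ (U : I → Matrix (Fin ((d + k + 2).choose k)) (Fin ((d + k + 2).choose k)) ℝ)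
      (V : J → Matrix (Fin ((d + k + 2).choose k)) (Fin ((d + k + 2).choose k)) ℝ),
      (∀ i, (U i).PosSemidef) ∧ (∀ j, (V j).PosSemidef) ∧
      ∀ i j, a i j = ∑ p, ∑ q, U i p q * V j p q :=
  stmt16_general d k a hval u v ha
end

section
/- Let B ⊆ ℝ^d be compact and span ℝ^d, contained in the closed unit ball, and suppose the unit ball is the minimum-volume origin-centered ellipsoid containing B. If (1/d)·I is not in the convex hull of {x x^T : x ∈ B}, then there exists a quadratic form q on ℝ^d with q(x) ≤ 1 for all x ∈ B and trace(q) > d, and for sufficiently small ε > 0 the ellipsoid {x : (1−ε)‖x‖² + ε·q(x) ≤ 1} contains B and has volume strictly smaller than the unit ball — a contradiction. Hence (1/d)·I ∈ conv{x x^T : x ∈ B}. -/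
/-!
If `(1/d) • 1` lies outside the convex hull of the compact set `{x xᵀ | x ∈ B}`, a hyperplane
strictly separates them. Symmetrised and normalised, the separating functional is a quadratic form
`q` with `q ≤ 1` on `B` and `trace q > d`. For small `ε > 0` the matrix `Q = 1 + ε • (q - 1)` is
positive definite, satisfies `⟪Q x, x⟫ = (1 - ε) ‖x‖² + ε q(x) ≤ 1` on `B`, and has
`det Q = 1 + ε (trace q - d) + O(ε²) > 1`: an ellipsoid containing `B` of smaller volume than
the unit ball.
-/

open Set Function Matrix Filter Topology

theorem isCompact_convexHull {E : Type*} [NormedAddCommGroup E] [NormedSpace ℝ E]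
    [FiniteDimensional ℝ E] {s : Set E} (hs : IsCompact s) : IsCompact (convexHull ℝ s) := by
  classical
  set N := Module.finrank ℝ E + 1
  let combine : (Fin N → ℝ) × (Fin N → E) → E := fun p => ∑ j, p.1 j • p.2 j
  suffices convexHull ℝ s = combine '' (stdSimplex ℝ (Fin N) ×ˢ univ.pi fun _ => s) by
    rw [this]
    exact ((isCompact_stdSimplex ℝ _).prod (isCompact_univ_pi fun _ => hs)).image (by fun_prop)
  refine subset_antisymm (fun x hx => ?_) ?_
  · -- Carathéodory: `x` is a convex combination of at most `N` affinely independent points of `s`.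
    obtain ⟨ι, _, z, w, hzs, hind, hw0, hw1, rfl⟩ := eq_pos_convex_span_of_mem_convexHull hx
    have : Nonempty ι := by
      by_contra h
      rw [not_nonempty_iff] at h
      simp at hw1
    obtain ⟨F⟩ : Nonempty (ι ↪ Fin N) := Function.Embedding.nonempty_of_card_le <| by
      simpa using hind.card_le_finrank_succ.trans (Nat.succ_le_succ (Submodule.finrank_le _))
    refine ⟨(FunOnFinite.linearMap ℝ ℝ F w, z ∘ invFun F),
      ⟨stdSimplex.image_linearMap F ⟨w, ⟨fun i => (hw0 i).le, hw1⟩, rfl⟩,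
        fun j _ => hzs (mem_range_self _)⟩, ?_⟩
    simp only [combine, FunOnFinite.linearMap_apply_apply, Finset.sum_smul]
    rw [← Finset.sum_fiberwise Finset.univ F (fun i => w i • z i)]
    refine Finset.sum_congr rfl fun j _ => Finset.sum_congr rfl fun i hi => ?_
    obtain rfl := (Finset.mem_filter.1 hi).2
    simp [leftInverse_invFun F.injective i]
  · rintro _ ⟨⟨w, z⟩, ⟨hw, hz⟩, rfl⟩
    exact mem_convexHull_of_exists_fintype w z hw.1 hw.2 (fun j => hz j trivial) rfl

namespace Matrix

variable {n : Type*} [Fintype n]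

theorem trace_vecMulVec_self_mul {R : Type*} [CommSemiring R] (x : n → R) (G : Matrix n n R) :
    trace (vecMulVec x x * G) = x ⬝ᵥ G *ᵥ x := by
  rw [vecMulVec_mul, trace_vecMulVec, dotProduct_mulVec, dotProduct_comm]

theorem trace_mul_transpose_of_isSymm {R : Type*} [CommSemiring R] {M : Matrix n n R}
    (hM : M.IsSymm) (H : Matrix n n R) :
    trace (M * Hᵀ) = trace (M * H) := by
  rw [← trace_transpose, transpose_mul, transpose_transpose, hM.eq, trace_mul_comm]

theorem exists_trace_mul_eq_of_linearMap {R : Type*} [CommSemiring R]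
    (f : Matrix n n R →ₗ[R] R) : ∃ H : Matrix n n R, ∀ M, f M = trace (M * H) := by
  classical
  refine ⟨of fun i j => f (single j i 1), fun M => ?_⟩
  have hsingle : ∀ i j, f (single i j (M i j)) = M i j * f (single i j 1) := fun i j => by
    rw [← smul_eq_mul, ← map_smul, smul_single, smul_eq_mul, mul_one]
  conv_lhs => rw [matrix_eq_sum_single M]
  simp [map_sum, hsingle, trace, mul_apply]

theorem exists_trace_mul_lt_of_notMem_convexHull {S : Set (Matrix n n ℝ)} (hS : IsCompact S)
    {P : Matrix n n ℝ} (hP : P ∉ convexHull ℝ S) :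
    ∃ (H : Matrix n n ℝ) (u : ℝ), (∀ M ∈ S, trace (M * H) < u) ∧ u < trace (P * H) := by
  -- `Matrix` has no global norm; any norm inducing the product topology does here.
  let : NormedAddCommGroup (Matrix n n ℝ) := Matrix.normedAddCommGroup
  let : NormedSpace ℝ (Matrix n n ℝ) := Matrix.normedSpace
  obtain ⟨f, u, hS, hP⟩ := geometric_hahn_banach_closed_point (convex_convexHull ℝ S)
    (isCompact_convexHull hS).isClosed hP
  obtain ⟨H, hH⟩ := exists_trace_mul_eq_of_linearMap (f : Matrix n n ℝ →ₗ[ℝ] ℝ)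
  refine ⟨H, u, fun M hM => ?_, ?_⟩
  · rw [← hH]; exact hS M (subset_convexHull ℝ S hM)
  · rw [← hH]; exact hP

theorem exists_isHermitian_trace_mul_lt_of_notMem_convexHull {S : Set (Matrix n n ℝ)}
    (hS : IsCompact S) (hSsymm : ∀ M ∈ S, M.IsSymm) {P : Matrix n n ℝ} (hPsymm : P.IsSymm)
    (hP : P ∉ convexHull ℝ S) :
    ∃ (G : Matrix n n ℝ) (u : ℝ), G.IsHermitian ∧ (∀ M ∈ S, trace (M * G) < u) ∧
      u < trace (P * G) := by
  obtain ⟨H, u, hSH, hPH⟩ := exists_trace_mul_lt_of_notMem_convexHull hS hP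
  have hsymm : ∀ M : Matrix n n ℝ, M.IsSymm →
      trace (M * ((2 : ℝ)⁻¹ • (H + Hᵀ))) = trace (M * H) := by
    intro M hM
    rw [mul_smul_comm, mul_add, trace_smul, trace_add, trace_mul_transpose_of_isSymm hM,
      smul_eq_mul]
    ring
  refine ⟨(2 : ℝ)⁻¹ • (H + Hᵀ), u, ?_, fun M hM => ?_, ?_⟩
  · exact isHermitian_iff_isSymm.2 ((isSymm_add_transpose_self H).smul _)
  · rw [hsymm M (hSsymm M hM)]; exact hSH M hM
  · rw [hsymm P hPsymm]; exact hPH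

theorem abs_mul_le_dotProduct_self (x : n → ℝ) (i j : n) : |x i * x j| ≤ x ⬝ᵥ x := by
  have hsq : ∀ k, x k ^ 2 ≤ x ⬝ᵥ x := fun k => by
    simpa [dotProduct, sq] using
      Finset.single_le_sum (fun k _ => mul_self_nonneg (x k)) (Finset.mem_univ k)
  rw [abs_mul]
  nlinarith [hsq i, hsq j, sq_abs (x i), sq_abs (x j), sq_nonneg (|x i| - |x j|)]

theorem abs_dotProduct_mulVec_le (A : Matrix n n ℝ) (x : n → ℝ) :
    |x ⬝ᵥ A *ᵥ x| ≤ (∑ i, ∑ j, |A i j|) * (x ⬝ᵥ x) := by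
  have hexp : x ⬝ᵥ A *ᵥ x = ∑ i, ∑ j, A i j * (x i * x j) := by
    simp only [dotProduct, mulVec, Finset.mul_sum]
    exact Finset.sum_congr rfl fun i _ => Finset.sum_congr rfl fun j _ => by ring
  rw [hexp, Finset.sum_mul]
  refine (Finset.abs_sum_le_sum_abs _ _).trans (Finset.sum_le_sum fun i _ => ?_)
  rw [Finset.sum_mul]
  refine (Finset.abs_sum_le_sum_abs _ _).trans (Finset.sum_le_sum fun j _ => ?_)
  rw [abs_mul]
  exact mul_le_mul_of_nonneg_left (abs_mul_le_dotProduct_self x i j) (abs_nonneg _)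

variable [DecidableEq n]

theorem eventually_posDef_one_add_smul {A : Matrix n n ℝ} (hA : A.IsHermitian) :
    ∀ᶠ ε in 𝓝 (0 : ℝ), (1 + ε • A).PosDef := by
  set c := ∑ i, ∑ j, |A i j|
  have hsmall : ∀ᶠ ε in 𝓝 (0 : ℝ), |ε| * c < 1 := by
    have : Tendsto (fun ε : ℝ => |ε| * c) (𝓝 0) (𝓝 (|0| * c)) :=
      (continuous_abs.mul continuous_const).tendsto 0
    exact this.eventually_lt_const (by simp)
  filter_upwards [hsmall] with ε hε
  refine posDef_iff_dotProduct_mulVec.2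
    ⟨isHermitian_one.add (hA.smul (IsSelfAdjoint.all ε)), fun x hx => ?_⟩
  have hxx : 0 < x ⬝ᵥ x := by simpa using dotProduct_self_star_pos_iff.2 hx
  have hperturb : |ε * (x ⬝ᵥ A *ᵥ x)| ≤ |ε| * c * (x ⬝ᵥ x) := by
    rw [abs_mul, mul_assoc]
    exact mul_le_mul_of_nonneg_left (abs_dotProduct_mulVec_le A x) (abs_nonneg ε)
  rw [star_trivial, add_mulVec, one_mulVec, smul_mulVec, dotProduct_add, dotProduct_smul,
    smul_eq_mul]
  linarith [neg_abs_le (ε * (x ⬝ᵥ A *ᵥ x)), mul_lt_mul_of_pos_right hε hxx]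

theorem eventually_one_lt_det_one_add_smul {A : Matrix n n ℝ} (hA : 0 < trace A) :
    ∀ᶠ ε in 𝓝[>] (0 : ℝ), 1 < det (1 + ε • A) := by
  set p := (det (1 + (Polynomial.X : Polynomial ℝ) • A.map Polynomial.C)).divX.divX
  have hlim : Tendsto (fun ε => trace A + p.eval ε * ε) (𝓝 0) (𝓝 (trace A + p.eval 0 * 0)) :=
    ((p.continuous.mul continuous_id).const_add _).tendsto 0
  rw [mul_zero, add_zero] at hlim
  filter_upwards [nhdsWithin_le_nhds (hlim.eventually_const_lt hA), self_mem_nhdsWithin]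
    with ε hpos (hε : 0 < ε)
  rw [det_one_add_smul]
  nlinarith [mul_pos hε hpos]

theorem exists_isHermitian_le_one_lt_trace {G : Matrix n n ℝ} (hG : G.IsHermitian)
    {B : Set (n → ℝ)} {u : ℝ} (hB : ∀ x ∈ B, x ⬝ᵥ x ≤ 1) (hGB : ∀ x ∈ B, x ⬝ᵥ G *ᵥ x ≤ u)
    (hGtr : Fintype.card n * u < trace G) :
    ∃ q : Matrix n n ℝ, q.IsHermitian ∧ (∀ x ∈ B, x ⬝ᵥ q *ᵥ x ≤ 1) ∧
      (Fintype.card n : ℝ) < trace q := by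
  -- Shift by `(s - u) • 1 ≥ 0` to make the bound `s` positive (using `x ⬝ᵥ x ≤ 1`), then scale.
  set s := |u| + 1
  have hs : 0 < s := by positivity
  have hc : 0 ≤ s - u := by linarith [le_abs_self u]
  refine ⟨s⁻¹ • (G + (s - u) • 1), (hG.add (isHermitian_one.smul (IsSelfAdjoint.all _))).smul
    (IsSelfAdjoint.all _), fun x hx => ?_, ?_⟩
  · rw [smul_mulVec, add_mulVec, smul_mulVec, one_mulVec, dotProduct_smul, dotProduct_add,
      dotProduct_smul, smul_eq_mul, smul_eq_mul, inv_mul_le_one₀ hs]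
    nlinarith [hGB x hx, hB x hx]
  · rw [trace_smul, trace_add, trace_smul, trace_one, smul_eq_mul, smul_eq_mul,
      lt_inv_mul_iff₀ hs]
    nlinarith

theorem exists_posDef_one_lt_det {q : Matrix n n ℝ} (hq : q.IsHermitian) {B : Set (n → ℝ)}
    (hB : ∀ x ∈ B, x ⬝ᵥ x ≤ 1) (hqB : ∀ x ∈ B, x ⬝ᵥ q *ᵥ x ≤ 1)
    (hqtr : (Fintype.card n : ℝ) < trace q) :
    ∃ Q : Matrix n n ℝ, Q.PosDef ∧ (∀ x ∈ B, x ⬝ᵥ Q *ᵥ x ≤ 1) ∧ 1 < Q.det := by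
  have htr : 0 < trace (q - 1) := by rw [trace_sub, trace_one]; linarith
  have hsmall : ∀ᶠ ε in 𝓝[>] (0 : ℝ),
      (1 + ε • (q - 1)).PosDef ∧ 1 < det (1 + ε • (q - 1)) ∧ 0 < ε ∧ ε < 1 := by
    filter_upwards [nhdsWithin_le_nhds (eventually_posDef_one_add_smul (hq.sub isHermitian_one)),
      eventually_one_lt_det_one_add_smul htr, self_mem_nhdsWithin,
      nhdsWithin_le_nhds (eventually_lt_nhds one_pos)] with ε h1 h2 h3 h4 using ⟨h1, h2, h3, h4⟩
  obtain ⟨ε, hposdef, hdet, hε0, hε1⟩ := hsmall.exists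
  refine ⟨1 + ε • (q - 1), hposdef, fun x hx => ?_, hdet⟩
  rw [add_mulVec, one_mulVec, smul_mulVec, sub_mulVec, one_mulVec, dotProduct_add,
    dotProduct_smul, dotProduct_sub, smul_eq_mul]
  nlinarith [hB x hx, hqB x hx]

end Matrix

theorem stmt19_general (d : ℕ) (hd : 0 < d) (B : Set (Fin d → ℝ)) (hB : IsCompact B)
    (hball : ∀ x ∈ B, ∑ i, x i ^ 2 ≤ 1)
    (hmin : ∀ Q : Matrix (Fin d) (Fin d) ℝ, Q.PosDef →
      (∀ x ∈ B, dotProduct x (Q.mulVec x) ≤ 1) → Q.det ≤ 1) :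
    ((1 : ℝ) / d) • (1 : Matrix (Fin d) (Fin d) ℝ) ∈
      convexHull ℝ {M : Matrix (Fin d) (Fin d) ℝ | ∃ x ∈ B, M = Matrix.vecMulVec x x} := by
  by_contra hP
  have hS : {M : Matrix (Fin d) (Fin d) ℝ | ∃ x ∈ B, M = vecMulVec x x} =
      (fun x => vecMulVec x x) '' B := by
    ext M; simp [eq_comm]
  obtain ⟨G, u, hG, hGB, hGP⟩ := exists_isHermitian_trace_mul_lt_of_notMem_convexHull
    (hS ▸ hB.image (continuous_id.matrix_vecMulVec continuous_id))
    (by rintro _ ⟨x, -, rfl⟩; exact transpose_vecMulVec x x) (isSymm_one.smul _) hP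
  have hB1 : ∀ x ∈ B, x ⬝ᵥ x ≤ 1 := fun x hx => by simpa [dotProduct, sq] using hball x hx
  have hGB' : ∀ x ∈ B, x ⬝ᵥ G *ᵥ x ≤ u := fun x hx => by
    simpa [trace_vecMulVec_self_mul] using (hGB _ ⟨x, hx, rfl⟩).le
  have hGtr : (Fintype.card (Fin d) : ℝ) * u < trace G := by
    have hd' : (0 : ℝ) < d := by exact_mod_cast hd
    rw [smul_mul, one_mul, trace_smul, smul_eq_mul, one_div, inv_mul_eq_div, lt_div_iff₀ hd']
      at hGP
    simpa [mul_comm] using hGP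
  obtain ⟨q, hq, hqB, hqtr⟩ := exists_isHermitian_le_one_lt_trace hG hB1 hGB' hGtr
  obtain ⟨Q, hQ, hQB, hQdet⟩ := exists_posDef_one_lt_det hq hB1 hqB hqtr
  exact (hmin Q hQ hQB).not_gt hQdet

theorem stmt19 (d : ℕ) (hd : 0 < d) (B : Set (Fin d → ℝ)) (hB : IsCompact B)
    (hspan : Submodule.span ℝ B = ⊤)
    (hball : ∀ x ∈ B, ∑ i, x i ^ 2 ≤ 1)
    (hmin : ∀ Q : Matrix (Fin d) (Fin d) ℝ, Q.PosDef →
      (∀ x ∈ B, dotProduct x (Q.mulVec x) ≤ 1) → Q.det ≤ 1) :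
    ((1 : ℝ) / d) • (1 : Matrix (Fin d) (Fin d) ℝ) ∈
      convexHull ℝ {M : Matrix (Fin d) (Fin d) ℝ | ∃ x ∈ B, M = Matrix.vecMulVec x x} :=
  stmt19_general d hd B hB hball hmin
end
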